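/- arXiv:1812.00673 — 2 statements merged into one kernel-verified Lean document; each statement's English description precedes it below -/
import Mathlib

section
/- If f ∈ C[0,T] ∩ C¹[0,T] attains its minimum over the interval [0,T] at a point t₀ ∈ (0,T], then the Caputo fractional derivative of f of order α at t₀ satisfies (₀D_t^α f)(t₀) ≤ 0. -/
open MeasureTheory Set

noncomputable section

/-- The Caputo fractional derivative of order `α`:
`(₀D_t^α f)(t) = (1 / Γ(1-α)) ∫₀^t (t - s)^(-α) f'(s) ds`. -/
def caputo (α : ℝ) (f : ℝ → ℝ) (t : ℝ) : ℝ :=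
  (1 / Real.Gamma (1 - α)) * ∫ s in Ioo (0:ℝ) t, (t - s) ^ (-α) * deriv f s

/-! Integrate by parts against `g s = (t - s) ^ (-α) * (f s - f t)`. Since `f` is Lipschitz, the
singularity of the kernel is mild enough for `g s → 0` as `s → t`, hence
`∫₀ᵗ (t - s) ^ (-α) f' s ds = -g 0 - α ∫₀ᵗ (t - s) ^ (-α - 1) (f s - f t) ds`,
and both terms on the right are nonpositive when `f` attains its minimum at `t`. -/

open Filter Topology

section KernelEstimates

variable {a t : ℝ}

theorem integrableOn_sub_rpow_Ioo {p : ℝ} (hp : -1 < p) :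
    IntegrableOn (fun s => (t - s) ^ p) (Ioo a t) := by
  have h := (intervalIntegral.intervalIntegrable_rpow' hp (a := 0) (b := t - a)).comp_sub_left t
  simp only [sub_zero, sub_sub_cancel] at h
  exact h.symm.def'.mono_set fun s hs =>
    ⟨(min_le_left _ _).trans_lt hs.1, hs.2.le.trans (le_max_right _ _)⟩

theorem norm_sub_rpow_mul_le {s x r q K : ℝ} (hst : s < t) (hx : |x| ≤ K * (t - s) ^ q) :
    ‖(t - s) ^ r * x‖ ≤ K * (t - s) ^ (r + q) := by
  have hts : 0 < t - s := sub_pos.2 hst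
  calc ‖(t - s) ^ r * x‖ = (t - s) ^ r * |x| := by
        rw [norm_mul, Real.norm_of_nonneg (Real.rpow_nonneg hts.le _), Real.norm_eq_abs]
    _ ≤ (t - s) ^ r * (K * (t - s) ^ q) := by gcongr
    _ = K * (t - s) ^ (r + q) := by rw [Real.rpow_add hts]; ring

theorem integrableOn_sub_rpow_mul_of_abs_le {u : ℝ → ℝ} {r q K : ℝ} (hrq : -1 < r + q)
    (hu : AEStronglyMeasurable u (volume.restrict (Ioo a t)))
    (hbound : ∀ s ∈ Ioo a t, |u s| ≤ K * (t - s) ^ q) :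
    IntegrableOn (fun s => (t - s) ^ r * u s) (Ioo a t) := by
  refine ((integrableOn_sub_rpow_Ioo hrq).const_mul K).mono'
    (((measurable_const.sub measurable_id).pow_const r).aestronglyMeasurable.mul hu) ?_
  refine (ae_restrict_iff' measurableSet_Ioo).2 (ae_of_all _ fun s hs => ?_)
  exact norm_sub_rpow_mul_le hs.2 (hbound s hs)

theorem tendsto_sub_rpow_mul_nhdsLT_zero {u : ℝ → ℝ} {r q K : ℝ} (hrq : 0 < r + q)
    (hat : a < t) (hbound : ∀ s ∈ Ioo a t, |u s| ≤ K * (t - s) ^ q) :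
    Tendsto (fun s => (t - s) ^ r * u s) (𝓝[<] t) (𝓝 0) := by
  have hlim : Tendsto (fun s => K * (t - s) ^ (r + q)) (𝓝[<] t) (𝓝 0) := by
    have hcont : ContinuousAt (fun s => K * (t - s) ^ (r + q)) t :=
      continuousAt_const.mul <| (Real.continuousAt_rpow_const _ _ (Or.inr hrq.le)).comp
        (continuousAt_const.sub continuousAt_id)
    simpa [Real.zero_rpow hrq.ne'] using hcont.continuousWithinAt (s := Iio t) |>.tendsto
  refine squeeze_zero_norm' ?_ hlim
  filter_upwards [Ioo_mem_nhdsLT hat] with s hs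
  exact norm_sub_rpow_mul_le hs.2 (hbound s hs)

end KernelEstimates

theorem hasDerivAt_sub_rpow_mul_sub {f : ℝ → ℝ} {f' c r s t : ℝ} (hst : s < t)
    (hf : HasDerivAt f f' s) :
    HasDerivAt (fun x => (t - x) ^ r * (f x - c))
      (-r * ((t - s) ^ (r - 1) * (f s - c)) + (t - s) ^ r * f') s := by
  have hkernel : HasDerivAt (fun x => (t - x) ^ r) (-1 * r * (t - s) ^ (r - 1)) s :=
    ((hasDerivAt_id s).const_sub t).rpow_const (Or.inl (sub_pos.2 hst).ne')
  exact (hkernel.mul (hf.sub_const c)).congr_deriv (by ring)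

namespace ContDiffOn

variable {f : ℝ → ℝ} {a t r : ℝ}

theorem exists_abs_deriv_le_and_abs_sub_le (hf : ContDiffOn ℝ 1 f (Icc a t)) (hat : a < t) :
    ∃ K, (∀ s ∈ Ioo a t, |deriv f s| ≤ K) ∧
      ∀ x ∈ Icc a t, ∀ y ∈ Icc a t, |f x - f y| ≤ K * |x - y| := by
  obtain ⟨K, hK⟩ := isCompact_Icc.exists_bound_of_continuousOn
    (hf.continuousOn_derivWithin (uniqueDiffOn_Icc hat) le_rfl)
  refine ⟨K, fun s hs => ?_, fun x hx y hy => ?_⟩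
  · rw [← derivWithin_of_mem_nhds (Icc_mem_nhds hs.1 hs.2)]
    exact hK s (Ioo_subset_Icc_self hs)
  · exact Convex.norm_image_sub_le_of_norm_derivWithin_le
      (hf.differentiableOn one_ne_zero) hK (convex_Icc a t) hy hx

theorem exists_abs_sub_right_le (hf : ContDiffOn ℝ 1 f (Icc a t)) (hat : a < t) :
    ∃ K, ∀ s ∈ Ioo a t, |f s - f t| ≤ K * (t - s) ^ (1 : ℝ) := by
  obtain ⟨K, -, hlip⟩ := hf.exists_abs_deriv_le_and_abs_sub_le hat
  refine ⟨K, fun s hs => ?_⟩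
  simpa [abs_of_neg (sub_neg.2 hs.2)] using
    hlip s (Ioo_subset_Icc_self hs) t (right_mem_Icc.2 hat.le)

theorem integrableOn_sub_rpow_mul_deriv (hf : ContDiffOn ℝ 1 f (Icc a t)) (hat : a < t)
    (hr : -1 < r) : IntegrableOn (fun s => (t - s) ^ r * deriv f s) (Ioo a t) := by
  obtain ⟨K, hderiv_le, -⟩ := hf.exists_abs_deriv_le_and_abs_sub_le hat
  refine integrableOn_sub_rpow_mul_of_abs_le (q := 0) (K := K) (by simpa using hr)
    (measurable_deriv f).aestronglyMeasurable ?_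
  simpa only [Real.rpow_zero, mul_one] using hderiv_le

theorem integrableOn_sub_rpow_mul_sub (hf : ContDiffOn ℝ 1 f (Icc a t)) (hat : a < t)
    (hr : -1 < r) : IntegrableOn (fun s => (t - s) ^ (r - 1) * (f s - f t)) (Ioo a t) := by
  obtain ⟨K, hK⟩ := hf.exists_abs_sub_right_le hat
  exact integrableOn_sub_rpow_mul_of_abs_le (by linarith)
    (((hf.continuousOn.sub continuousOn_const).mono Ioo_subset_Icc_self).aestronglyMeasurable
      measurableSet_Ioo) hK

theorem integral_sub_rpow_mul_deriv_add_eq (hf : ContDiffOn ℝ 1 f (Icc a t)) (hat : a < t)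
    (hr : -1 < r) :
    ∫ s in Ioo a t, (-r * ((t - s) ^ (r - 1) * (f s - f t)) + (t - s) ^ r * deriv f s) =
      -((t - a) ^ r * (f a - f t)) := by
  set g := fun x => (t - x) ^ r * (f x - f t)
  have hderiv (s : ℝ) (hs : s ∈ Ioo a t) : HasDerivAt g
      (-r * ((t - s) ^ (r - 1) * (f s - f t)) + (t - s) ^ r * deriv f s) s :=
    hasDerivAt_sub_rpow_mul_sub hs.2 (hf.differentiableOn one_ne_zero s
      (Ioo_subset_Icc_self hs) |>.differentiableAt (Icc_mem_nhds hs.1 hs.2)).hasDerivAt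
  have hint := ((hf.integrableOn_sub_rpow_mul_sub hat hr).const_mul (-r)).add
    (hf.integrableOn_sub_rpow_mul_deriv hat hr)
  have hleft : Tendsto g (𝓝[>] a) (𝓝 (g a)) := by
    have hg_cont : ContinuousWithinAt g (Icc a t) a :=
      ((continuousAt_const.sub continuousAt_id).rpow_const
        (Or.inl (sub_pos.2 hat).ne')).continuousWithinAt.mul
        ((hf.continuousOn a (left_mem_Icc.2 hat.le)).sub continuousWithinAt_const)
    exact (hg_cont.mono_of_mem_nhdsWithin (Icc_mem_nhdsGT hat)).tendsto
  have hright : Tendsto g (𝓝[<] t) (𝓝 0) := by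
    obtain ⟨K, hK⟩ := hf.exists_abs_sub_right_le hat
    exact tendsto_sub_rpow_mul_nhdsLT_zero (by linarith) hat hK
  rw [← integral_Ioc_eq_integral_Ioo, ← intervalIntegral.integral_of_le hat.le,
    intervalIntegral.integral_eq_sub_of_hasDerivAt_of_tendsto hat hderiv
      ((intervalIntegrable_iff_integrableOn_Ioo_of_le hat.le).2 hint) hleft hright, zero_sub]

theorem setIntegral_sub_rpow_mul_deriv_nonpos_of_isMinOn (hf : ContDiffOn ℝ 1 f (Icc a t))
    (hat : a < t) (hr : r ∈ Ioc (-1) 0) (hmin : IsMinOn f (Icc a t) t) :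
    ∫ s in Ioo a t, (t - s) ^ r * deriv f s ≤ 0 := by
  have hint := hf.integrableOn_sub_rpow_mul_deriv hat hr.1
  have hint_extra := (hf.integrableOn_sub_rpow_mul_sub hat hr.1).const_mul (-r)
  have hextra_nonneg (s : ℝ) (hs : s ∈ Ioo a t) :
      0 ≤ -r * ((t - s) ^ (r - 1) * (f s - f t)) :=
    mul_nonneg (neg_nonneg.2 hr.2) (mul_nonneg (Real.rpow_nonneg (sub_pos.2 hs.2).le _)
      (sub_nonneg.2 (hmin (Ioo_subset_Icc_self hs))))
  have hboundary_nonneg : 0 ≤ (t - a) ^ r * (f a - f t) :=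
    mul_nonneg (Real.rpow_nonneg (sub_pos.2 hat).le _)
      (sub_nonneg.2 (hmin (left_mem_Icc.2 hat.le)))
  calc ∫ s in Ioo a t, (t - s) ^ r * deriv f s
      ≤ ∫ s in Ioo a t, (-r * ((t - s) ^ (r - 1) * (f s - f t)) + (t - s) ^ r * deriv f s) :=
        setIntegral_mono_on hint (hint_extra.add hint) measurableSet_Ioo fun s hs =>
          le_add_of_nonneg_left (hextra_nonneg s hs)
    _ = -((t - a) ^ r * (f a - f t)) := hf.integral_sub_rpow_mul_deriv_add_eq hat hr.1
    _ ≤ 0 := neg_nonpos.2 hboundary_nonneg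

end ContDiffOn

theorem caputo_deriv_nonpos_at_min_general
    (T α : ℝ) (hα : α ∈ Ioo (0:ℝ) 1)
    (f : ℝ → ℝ)
    (hf_C1 : ContDiffOn ℝ 1 f (Icc (0:ℝ) T))
    (t₀ : ℝ) (ht₀ : t₀ ∈ Ioc (0:ℝ) T)
    (hmin : ∀ t ∈ Icc (0:ℝ) T, f t₀ ≤ f t) :
    caputo α f t₀ ≤ 0 := by
  have hsub : Icc 0 t₀ ⊆ Icc 0 T := Icc_subset_Icc_right ht₀.2
  have hintegral :=
    (hf_C1.mono hsub).setIntegral_sub_rpow_mul_deriv_nonpos_of_isMinOn (r := -α) ht₀.1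
      ⟨by linarith [hα.2], by linarith [hα.1]⟩ (isMinOn_iff.2 fun t ht => hmin t (hsub ht))
  have hGamma : 0 < Real.Gamma (1 - α) := Real.Gamma_pos_of_pos (sub_pos.2 hα.2)
  exact mul_nonpos_of_nonneg_of_nonpos (one_div_nonneg.2 hGamma.le) hintegral

/-- If `f ∈ C[0,T] ∩ C¹[0,T]` attains its minimum over `[0,T]` at a point `t₀ ∈ (0,T]`,
then the Caputo fractional derivative of order `α ∈ (0,1)` of `f` at `t₀` is nonpositive. -/
theorem caputo_deriv_nonpos_at_min
    (T α : ℝ) (hT : 0 < T) (hα : α ∈ Ioo (0:ℝ) 1)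
    (f : ℝ → ℝ)
    (hf_cont : ContinuousOn f (Icc (0:ℝ) T))
    (hf_C1 : ContDiffOn ℝ 1 f (Icc (0:ℝ) T))
    (t₀ : ℝ) (ht₀ : t₀ ∈ Ioc (0:ℝ) T)
    (hmin : ∀ t ∈ Icc (0:ℝ) T, f t₀ ≤ f t) :
    caputo α f t₀ ≤ 0 :=
  caputo_deriv_nonpos_at_min_general T α hα f hf_C1 t₀ ht₀ hmin
end
end

section
/- For a scalar function u: ℝ^d → ℝ, the composition of the nonlocal divergence operator with the tensor Θ and the adjoint operator satisfies D(Θ·D*u)(x) = −2∫_{ℝ^d}(u(y) − u(x)) α(x,y)·(Θ(x,y)·α(x,y)) dy for all x ∈ ℝ^d; consequently, with kernel γ(x,y) = α(x,y)·(Θ(x,y)·α(x,y)), one has −Lu = D(Θ·D*u), where (Lu)(x) = 2∫_{ℝ^d}(u(y) − u(x))γ(x,y)dy. -/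
/-! Since `α` is antisymmetric, `D*u` is symmetric in `(x, y)`, and so is `Θ·D*u` because `Θ` is.
On a symmetric field `ν` the divergence reduces to `D(ν)(x) = 2 ∫ ν(x,y)·α(x,y) dy`, and for
`ν = Θ·D*u` the integrand is `-(u(y) - u(x)) α·(Θα) = -(u(y) - u(x)) γ(x,y)`. -/

open MeasureTheory Set Metric

noncomputable section

/-- The adjoint `D*` of the nonlocal divergence operator acting on a scalar function:
`D*(u)(x,y) = -(u(y) - u(x)) α(x,y)`. -/
def nlDstar (d k : ℕ) (A : EuclideanSpace ℝ (Fin d) → EuclideanSpace ℝ (Fin d) → Fin k → ℝ)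
    (u : EuclideanSpace ℝ (Fin d) → ℝ) (x y : EuclideanSpace ℝ (Fin d)) : Fin k → ℝ :=
  fun i => -(u y - u x) * A x y i

/-- The nonlocal divergence operator:
`D(ν)(x) = ∫_{ℝ^d} (ν(x,y) + ν(y,x)) · α(x,y) dy`. -/
def nlDiv (d k : ℕ) (A : EuclideanSpace ℝ (Fin d) → EuclideanSpace ℝ (Fin d) → Fin k → ℝ)
    (ν : EuclideanSpace ℝ (Fin d) → EuclideanSpace ℝ (Fin d) → Fin k → ℝ)
    (x : EuclideanSpace ℝ (Fin d)) : ℝ :=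
  ∫ y, dotProduct (fun i => ν x y i + ν y x i) (A x y)

/-- The kernel `γ(x,y) = α(x,y) · (Θ(x,y) · α(x,y))`. -/
def kernelOf (d k : ℕ) (A : EuclideanSpace ℝ (Fin d) → EuclideanSpace ℝ (Fin d) → Fin k → ℝ)
    (Θ : EuclideanSpace ℝ (Fin d) → EuclideanSpace ℝ (Fin d) → Matrix (Fin k) (Fin k) ℝ)
    (x y : EuclideanSpace ℝ (Fin d)) : ℝ :=
  dotProduct (A x y) ((Θ x y).mulVec (A x y))

/-- The nonlocal diffusion operator `(L f)(x) = 2 ∫_{ℝ^d} (f(y) - f(x)) γ(x,y) dy`. -/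
def nonlocalOp (d : ℕ) (γ : EuclideanSpace ℝ (Fin d) → EuclideanSpace ℝ (Fin d) → ℝ)
    (f : EuclideanSpace ℝ (Fin d) → ℝ) (x : EuclideanSpace ℝ (Fin d)) : ℝ :=
  2 * ∫ y, (f y - f x) * γ x y

section

variable {d k : ℕ} {A : EuclideanSpace ℝ (Fin d) → EuclideanSpace ℝ (Fin d) → Fin k → ℝ}

theorem nlDstar_eq_smul (u : EuclideanSpace ℝ (Fin d) → ℝ) (x y : EuclideanSpace ℝ (Fin d)) :
    nlDstar d k A u x y = (-(u y - u x)) • A x y :=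
  rfl

theorem nlDstar_symm (hA_anti : ∀ x y, A x y = fun i => -(A y x i))
    (u : EuclideanSpace ℝ (Fin d) → ℝ) (x y : EuclideanSpace ℝ (Fin d)) :
    nlDstar d k A u y x = nlDstar d k A u x y := by
  funext i
  simp only [nlDstar, congrFun (hA_anti y x) i]
  ring

theorem nlDiv_eq_two_mul_integral_of_symm {ν : EuclideanSpace ℝ (Fin d) → EuclideanSpace ℝ (Fin d) → Fin k → ℝ}
    (hν : ∀ x y, ν y x = ν x y) (x : EuclideanSpace ℝ (Fin d)) :
    nlDiv d k A ν x = 2 * ∫ y, ν x y ⬝ᵥ A x y := by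
  rw [← integral_const_mul]
  refine integral_congr_ae (Filter.Eventually.of_forall fun y => ?_)
  change (ν x y + ν y x) ⬝ᵥ A x y = 2 * (ν x y ⬝ᵥ A x y)
  rw [hν, add_dotProduct, two_mul]

theorem mulVec_nlDstar_dotProduct
    (Θ : EuclideanSpace ℝ (Fin d) → EuclideanSpace ℝ (Fin d) → Matrix (Fin k) (Fin k) ℝ)
    (u : EuclideanSpace ℝ (Fin d) → ℝ) (x y : EuclideanSpace ℝ (Fin d)) :
    (Θ x y).mulVec (nlDstar d k A u x y) ⬝ᵥ A x y = -((u y - u x) * kernelOf d k A Θ x y) := by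
  rw [nlDstar_eq_smul, Matrix.mulVec_smul, smul_dotProduct, dotProduct_comm, kernelOf,
    smul_eq_mul, neg_mul]

end

theorem nlDiv_theta_Dstar_eq_general
    (d k : ℕ)
    (A : EuclideanSpace ℝ (Fin d) → EuclideanSpace ℝ (Fin d) → Fin k → ℝ)
    (hA_anti : ∀ x y, A x y = fun i => -(A y x i))
    (Θ : EuclideanSpace ℝ (Fin d) → EuclideanSpace ℝ (Fin d) → Matrix (Fin k) (Fin k) ℝ)
    (hΘ_symm_args : ∀ x y, Θ x y = Θ y x)
    (u : EuclideanSpace ℝ (Fin d) → ℝ) :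
    (∀ x, nlDiv d k A (fun a b => (Θ a b).mulVec (nlDstar d k A u a b)) x
        = -2 * ∫ y, (u y - u x) * kernelOf d k A Θ x y) ∧
    (∀ x, -(nonlocalOp d (kernelOf d k A Θ) u x)
        = nlDiv d k A (fun a b => (Θ a b).mulVec (nlDstar d k A u a b)) x) := by
  have hdiv : ∀ x, nlDiv d k A (fun a b => (Θ a b).mulVec (nlDstar d k A u a b)) x
      = -2 * ∫ y, (u y - u x) * kernelOf d k A Θ x y := by
    intro x
    rw [nlDiv_eq_two_mul_integral_of_symm (fun a b => by rw [hΘ_symm_args, nlDstar_symm hA_anti])]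
    simp only [mulVec_nlDstar_dotProduct, integral_neg]
    ring
  refine ⟨hdiv, fun x => ?_⟩
  rw [hdiv, nonlocalOp]
  ring

/-- For a scalar function `u : ℝ^d → ℝ`,
`D(Θ·D*u)(x) = -2 ∫_{ℝ^d} (u(y) - u(x)) α(x,y)·(Θ(x,y)·α(x,y)) dy` for all `x`;
consequently, with the kernel `γ(x,y) = α(x,y)·(Θ(x,y)·α(x,y))`, one has
`-Lu = D(Θ·D*u)`, where `(Lu)(x) = 2 ∫_{ℝ^d} (u(y) - u(x)) γ(x,y) dy`. -/
theorem nlDiv_theta_Dstar_eq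
    (d k : ℕ)
    (A : EuclideanSpace ℝ (Fin d) → EuclideanSpace ℝ (Fin d) → Fin k → ℝ)
    (hA_anti : ∀ x y, A x y = fun i => -(A y x i))
    (Θ : EuclideanSpace ℝ (Fin d) → EuclideanSpace ℝ (Fin d) → Matrix (Fin k) (Fin k) ℝ)
    (hΘ_symm_args : ∀ x y, Θ x y = Θ y x)
    (hΘ_symm : ∀ x y, (Θ x y).IsSymm)
    (hΘ_posdef : ∀ x y, (Θ x y).PosDef)
    (u : EuclideanSpace ℝ (Fin d) → ℝ) :
    (∀ x, nlDiv d k A (fun a b => (Θ a b).mulVec (nlDstar d k A u a b)) x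
        = -2 * ∫ y, (u y - u x) * kernelOf d k A Θ x y) ∧
    (∀ x, -(nonlocalOp d (kernelOf d k A Θ) u x)
        = nlDiv d k A (fun a b => (Θ a b).mulVec (nlDstar d k A u a b)) x) :=
  nlDiv_theta_Dstar_eq_general d k A hA_anti Θ hΘ_symm_args u
end
end
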